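/- The graph R_0 on {c, x, u, v, y} with edge set {cx, cu, cv, cy} (the star K_{1,4} with center c) is not a mixed unit interval graph, i.e., it has no intersection representation by unit intervals of any type. -/
import Mathlib


open Set

/-- A unit interval of the real line: one of the four types of intervals of length 1. -/
def IsUnitInterval (s : Set ℝ) : Prop :=
  ∃ x : ℝ, s = Set.Icc x (x + 1) ∨ s = Set.Ioo x (x + 1) ∨
    s = Set.Ioc x (x + 1) ∨ s = Set.Ico x (x + 1)

/-- `f` is an intersection representation of `G`: distinct vertices are adjacent iff
their assigned sets intersect. -/
def IsIntervalRep {V : Type*} (G : SimpleGraph V) (f : V → Set ℝ) : Prop :=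
  ∀ u v : V, u ≠ v → (G.Adj u v ↔ (f u ∩ f v).Nonempty)

/-- A mixed unit interval graph: intersection graph of unit intervals of any of the four types. -/
def MixedUnitIntervalGraph {V : Type*} (G : SimpleGraph V) : Prop :=
  ∃ f : V → Set ℝ, IsIntervalRep G f ∧ ∀ v, IsUnitInterval (f v)

/-- `G` contains an induced subgraph isomorphic to `H`. -/
def HasInducedSubgraph {V W : Type*} (G : SimpleGraph V) (H : SimpleGraph W) : Prop :=
  ∃ f : W ↪ V, ∀ a b : W, H.Adj a b ↔ G.Adj (f a) (f b)

/-- `G` is an interval graph (intersection graph of closed real intervals). -/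
def IsIntervalGraph {V : Type*} (G : SimpleGraph V) : Prop :=
  ∃ f : V → Set ℝ, IsIntervalRep G f ∧ ∀ v, ∃ a b : ℝ, f v = Set.Icc a b

/-- `G` is twin-free: distinct vertices have distinct closed neighborhoods. -/
def TwinFree {V : Type*} (G : SimpleGraph V) : Prop :=
  ∀ u v : V, insert u (G.neighborSet u) = insert v (G.neighborSet v) → u = v

/-- R_0 = K_{1,4}: center 0 adjacent to 1,2,3,4, and no other edges. -/
def R0 : SimpleGraph (Fin 5) := SimpleGraph.fromRel (fun u v => u = 0 ∧ v ≠ 0)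

private lemma unit_bounds {s : Set ℝ} (h : IsUnitInterval s) :
    ∃ x : ℝ, Set.Ioo x (x + 1) ⊆ s ∧ s ⊆ Set.Icc x (x + 1) := by
  obtain ⟨x, h⟩ := h
  refine ⟨x, ?_, ?_⟩ <;> rcases h with h | h | h | h <;> rw [h] <;>
    intro y hy <;>
    simp only [Set.mem_Ioo, Set.mem_Ioc, Set.mem_Ico, Set.mem_Icc] at hy ⊢ <;>
    constructor <;> linarith [hy.1, hy.2]

/-- R_0 (the star K_{1,4}) is not a mixed unit interval graph. -/
theorem R0_not_mixed_unit : ¬ MixedUnitIntervalGraph R0 := by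
  rintro ⟨f, hrep, hunit⟩
  choose b hIoo hIcc using fun v => unit_bounds (hunit v)
  -- adjacency facts
  have adj0 : ∀ i : Fin 5, i ≠ 0 → (f 0 ∩ f i).Nonempty := by
    intro i hi
    refine (hrep 0 i (Ne.symm hi)).1 ?_
    simp [R0, SimpleGraph.fromRel_adj, hi, Ne.symm hi]
  have near : ∀ i : Fin 5, i ≠ 0 → b 0 - 1 ≤ b i ∧ b i ≤ b 0 + 1 := by
    intro i hi
    obtain ⟨p, hp0, hpi⟩ := adj0 i hi
    have h0 := hIcc 0 hp0
    have h1 := hIcc i hpi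
    simp only [Set.mem_Icc] at h0 h1
    constructor <;> linarith [h0.1, h0.2, h1.1, h1.2]
  have far : ∀ i j : Fin 5, i ≠ 0 → j ≠ 0 → i ≠ j →
      b i + 1 ≤ b j ∨ b j + 1 ≤ b i := by
    intro i j hi hj hij
    by_contra hc
    push_neg at hc
    have hadj : ¬ R0.Adj i j := by
      simp [R0, SimpleGraph.fromRel_adj, hi, hj, hij]
    have hempty : ¬ (f i ∩ f j).Nonempty := fun h => hadj ((hrep i j hij).2 h)
    apply hempty
    refine ⟨(b i + b j + 1) / 2, hIoo i ?_, hIoo j ?_⟩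
    · constructor <;> [linarith [hc.2]; linarith [hc.1]]
    · constructor <;> [linarith [hc.1]; linarith [hc.2]]
  have n1 := near 1 (by decide)
  have n2 := near 2 (by decide)
  have n3 := near 3 (by decide)
  have n4 := near 4 (by decide)
  have d12 := far 1 2 (by decide) (by decide) (by decide)
  have d13 := far 1 3 (by decide) (by decide) (by decide)
  have d14 := far 1 4 (by decide) (by decide) (by decide)
  have d23 := far 2 3 (by decide) (by decide) (by decide)
  have d24 := far 2 4 (by decide) (by decide) (by decide)
  have d34 := far 3 4 (by decide) (by decide) (by decide)
  rcases d12 with h12 | h12 <;> rcases d13 with h13 | h13 <;>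
    rcases d14 with h14 | h14 <;> rcases d23 with h23 | h23 <;>
    rcases d24 with h24 | h24 <;> rcases d34 with h34 | h34 <;>
    linarith [n1.1, n1.2, n2.1, n2.2, n3.1, n3.2, n4.1, n4.2]
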